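/- Let G be a tree (a finite, connected, acyclic simple graph) on vertex set V containing distinct vertices R and j, and let v be a vertex lying on the unique path from R to j with v ∉ {R, j}. Let C_R denote the vertex set of the connected component of R in G − v. Then the reduced density operator Tr_v ( |G⟩⟨G| ) on ⨂_{u∈V∖{v}} ℂ² is separable with respect to the bipartition ( C_R , V∖({v}∪C_R) ); moreover j ∈ V∖({v}∪C_R). -/

import Mathlib

open scoped BigOperators

noncomputable section

/-- The state space of a collection of qubits indexed by `V`:
amplitudes on computational-basis configurations `V → Bool`. -/
abbrev QState (V : Type*) := (V → Bool) → ℂ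

variable {V : Type*}

/-- The inner product `⟨ψ|φ⟩`. -/
def qInner [Fintype V] [DecidableEq V] (ψ φ : QState V) : ℂ :=
  ∑ x, starRingEnd ℂ (ψ x) * φ x

/-- Pauli `X` acting on qubit `a`. -/
def pauliX [DecidableEq V] (a : V) (ψ : QState V) : QState V :=
  fun x => ψ (Function.update x a (!x a))

/-- Pauli `Z` acting on qubit `a`. -/
def pauliZ (a : V) (ψ : QState V) : QState V :=
  fun x => (if x a then (-1 : ℂ) else 1) * ψ x

/-- Pauli `Y` acting on qubit `a`. -/
def pauliY [DecidableEq V] (a : V) (ψ : QState V) : QState V :=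
  fun x => (if x a then Complex.I else -Complex.I) * ψ (Function.update x a (!x a))

/-- The tensor product `⨂_{b ∈ s} Z^{(b)}` of Pauli `Z` over the qubits in `s`. -/
def pauliZProd (s : Finset V) (ψ : QState V) : QState V :=
  fun x => (∏ b ∈ s, if x b then (-1 : ℂ) else 1) * ψ x

/-- A tensor product over the qubits in `s` of the diagonal single-qubit gate
`diag (f false, f true)`. -/
def diagProd (s : Finset V) (f : Bool → ℂ) (ψ : QState V) : QState V :=
  fun x => (∏ b ∈ s, f (x b)) * ψ x

/-- The sign `(-1)^{x u · x v}` contributed by an edge `{u, v}`. -/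
def edgeSign (x : V → Bool) : Sym2 V → ℂ :=
  Sym2.lift ⟨fun a b => if x a && x b then (-1 : ℂ) else 1,
    fun a b => by simp [Bool.and_comm]⟩

/-- The graph state `|G⟩ = (∏_{{u,v}∈E} CZ^{(uv)}) ⨂_v |+⟩^{(v)}` of a finite simple graph,
written out in amplitudes. -/
def graphState [Fintype V] [DecidableEq V] (G : SimpleGraph V) [DecidableRel G.Adj] :
    QState V :=
  fun x => ((Real.sqrt 2 : ℝ) : ℂ)⁻¹ ^ (Fintype.card V) * ∏ e ∈ G.edgeFinset, edgeSign x e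

/-- Local complementation `τ_a(G)` of a graph `G` at the vertex `a`: complement the
adjacency among the neighbors of `a`, leaving all other adjacencies unchanged. -/
def localComp (G : SimpleGraph V) (a : V) : SimpleGraph V where
  Adj u v :=
    (G.Adj a u ∧ G.Adj a v ∧ u ≠ v ∧ ¬ G.Adj u v) ∨
      ((¬ (G.Adj a u ∧ G.Adj a v)) ∧ G.Adj u v)
  symm := by
    constructor
    intro u v h
    rcases h with ⟨h1, h2, h3, h4⟩ | ⟨h1, h2⟩
    · exact Or.inl ⟨h2, h1, h3.symm, fun h => h4 (G.adj_symm h)⟩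
    · exact Or.inr ⟨fun h => h1 ⟨h.2, h.1⟩, G.adj_symm h2⟩
  loopless := by
    constructor
    intro u h
    rcases h with ⟨_, _, h3, _⟩ | ⟨_, h2⟩
    · exact h3 rfl
    · exact G.irrefl h2

instance [DecidableEq V] (G : SimpleGraph V) [DecidableRel G.Adj] (a : V) :
    DecidableRel (localComp G a).Adj := fun u v =>
  inferInstanceAs (Decidable
    ((G.Adj a u ∧ G.Adj a v ∧ u ≠ v ∧ ¬ G.Adj u v) ∨
      ((¬ (G.Adj a u ∧ G.Adj a v)) ∧ G.Adj u v)))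

/-- The induced subgraph of `G` on the vertices satisfying `P`. -/
def inducedSub (G : SimpleGraph V) (P : V → Prop) : SimpleGraph {v : V // P v} :=
  SimpleGraph.comap Subtype.val G

instance (G : SimpleGraph V) [DecidableRel G.Adj] (P : V → Prop) :
    DecidableRel (inducedSub G P).Adj := fun u v =>
  inferInstanceAs (Decidable (G.Adj u.1 v.1))

/-- The eigenvectors `|Z,+⟩ = |0⟩`, `|Z,-⟩ = |1⟩` of Pauli `Z`
(`s = false` the `+1`-eigenvector, `s = true` the `-1`-eigenvector). -/
def zVec (s : Bool) : Bool → ℂ := fun c => if c = s then 1 else 0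

/-- The eigenvectors `|X,±⟩ = (|0⟩ ± |1⟩)/√2` of Pauli `X`
(`s = false` the `+1`-eigenvector, `s = true` the `-1`-eigenvector). -/
def xVec (s : Bool) : Bool → ℂ :=
  fun c => ((Real.sqrt 2 : ℝ) : ℂ)⁻¹ * (if c && s then -1 else 1)

/-- The eigenvectors `|Y,±⟩ = (|0⟩ ± i|1⟩)/√2` of Pauli `Y`
(`s = false` the `+1`-eigenvector, `s = true` the `-1`-eigenvector). -/
def yVec (s : Bool) : Bool → ℂ :=
  fun c => ((Real.sqrt 2 : ℝ) : ℂ)⁻¹ *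
    (if c then (if s then -Complex.I else Complex.I) else 1)

/-- The rank-one projector `|v⟩⟨v|` on qubit `a` (identity elsewhere),
for a single-qubit vector `v`. -/
def projDir [DecidableEq V] (a : V) (v : Bool → ℂ) (ψ : QState V) : QState V :=
  fun x => v (x a) *
    (starRingEnd ℂ (v false) * ψ (Function.update x a false) +
      starRingEnd ℂ (v true) * ψ (Function.update x a true))

/-- The tensor product `|v⟩^{(a)} ⊗ |φ⟩` of a single-qubit state on qubit `a` with a state
on the remaining qubits. -/
def tensorQubit [DecidableEq V] (a : V) (v : Bool → ℂ) (φ : QState {u : V // u ≠ a}) :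
    QState V :=
  fun x => v (x a) * φ (fun u => x u.1)

/-- Apply a single-qubit gate with matrix entries `m r c = ⟨r|M|c⟩` on qubit `a`. -/
def applyGate [DecidableEq V] (a : V) (m : Bool → Bool → ℂ) (ψ : QState V) : QState V :=
  fun x => m (x a) false * ψ (Function.update x a false) +
    m (x a) true * ψ (Function.update x a true)

/-- The square roots `√(±iY) = (I ± iY)/√2`
(`s = false` for `√(+iY)`, `s = true` for `√(-iY)`). -/
def sqrtiY (s : Bool) : Bool → Bool → ℂ :=
  fun r c => ((Real.sqrt 2 : ℝ) : ℂ)⁻¹ *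
    (if s then (if r = false ∧ c = true then -1 else 1)
     else (if r = true ∧ c = false then -1 else 1))

/-- The Hadamard gate. -/
def hadamard : Bool → Bool → ℂ :=
  fun r c => ((Real.sqrt 2 : ℝ) : ℂ)⁻¹ * (if r && c then -1 else 1)

/-- Apply a tensor product of single-qubit gates, one on each qubit. -/
def applyLocal [Fintype V] [DecidableEq V] (u : V → Bool → Bool → ℂ) (ψ : QState V) :
    QState V :=
  fun x => ∑ y : V → Bool, (∏ v, u v (x v) (y v)) * ψ y

/-- `2×2` matrix multiplication (matrices as `Bool → Bool → ℂ`). -/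
def matMul2 (a b : Bool → Bool → ℂ) : Bool → Bool → ℂ :=
  fun r c => ∑ k : Bool, a r k * b k c

/-- Adjoint of a `2×2` matrix. -/
def matAdj2 (a : Bool → Bool → ℂ) : Bool → Bool → ℂ := fun r c => starRingEnd ℂ (a c r)

def idMat : Bool → Bool → ℂ := fun r c => if r = c then 1 else 0
def xMat : Bool → Bool → ℂ := fun r c => if r = c then 0 else 1
def yMat : Bool → Bool → ℂ := fun r c => if r = c then 0 else if r then Complex.I else -Complex.I
def zMat : Bool → Bool → ℂ := fun r c => if r = c then (if r then -1 else 1) else 0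

/-- A `2×2` matrix is unitary. -/
def IsUnitary2 (u : Bool → Bool → ℂ) : Prop := matMul2 (matAdj2 u) u = idMat

/-- A single-qubit Clifford unitary: a unitary conjugating `X` and `Z` into
`i^k·P` with `P` a Pauli matrix. -/
def IsClifford1 (u : Bool → Bool → ℂ) : Prop :=
  IsUnitary2 u ∧
    (∃ (k : ℕ) (P : Bool → Bool → ℂ), P ∈ ({idMat, xMat, yMat, zMat} : Set _) ∧
      matMul2 (matMul2 u xMat) (matAdj2 u) = Complex.I ^ k • P) ∧
    (∃ (k : ℕ) (P : Bool → Bool → ℂ), P ∈ ({idMat, xMat, yMat, zMat} : Set _) ∧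
      matMul2 (matMul2 u zMat) (matAdj2 u) = Complex.I ^ k • P)

/-- The action of the `n`-qubit Pauli operator `c · ⨂_v X^{xv v} Z^{zv v}`. -/
def pauliAction [Fintype V] (c : ℂ) (xv zv : V → Bool) (ψ : QState V) : QState V :=
  fun s => c * (∏ v, if zv v && (xor (s v) (xv v)) then (-1 : ℂ) else 1) *
    ψ (fun v => xor (s v) (xv v))

/-- The outer product `|ψ⟩⟨φ|` as a matrix on configurations. -/
def outer (ψ φ : QState V) : (V → Bool) → (V → Bool) → ℂ :=
  fun x y => ψ x * starRingEnd ℂ (φ y)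

open Classical in
/-- Partial trace keeping the qubits that satisfy `P` (tracing out the others). -/
def ptraceKeep [Fintype V] [DecidableEq V] (P : V → Prop)
    (ρ : (V → Bool) → (V → Bool) → ℂ) :
    ({v : V // P v} → Bool) → ({v : V // P v} → Bool) → ℂ :=
  fun x y => ∑ z : {v : V // ¬ P v} → Bool,
    ρ (fun w => if h : P w then x ⟨w, h⟩ else z ⟨w, h⟩)
      (fun w => if h : P w then y ⟨w, h⟩ else z ⟨w, h⟩)

open Classical in
/-- Apply a product of single-qubit bras `⟨bra v|` to each qubit `v` satisfying `P`,
leaving a state on the remaining qubits. -/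
def applyBras [Fintype V] [DecidableEq V] (P : V → Prop) (bra : V → Bool → ℂ)
    (ψ : QState V) : QState {v : V // ¬ P v} :=
  fun x => ∑ z : {v : V // P v} → Bool,
    (∏ v : {v : V // P v}, bra v.1 (z v)) *
      ψ (fun w => if h : P w then z ⟨w, h⟩ else x ⟨w, h⟩)

/-- A density operator: hermitian, trace one, positive semidefinite. -/
def IsDensityOp {α : Type*} [Fintype α] [DecidableEq α]
    (ρ : (α → Bool) → (α → Bool) → ℂ) : Prop :=
  (∀ x y, starRingEnd ℂ (ρ y x) = ρ x y) ∧ (∑ x, ρ x x = 1) ∧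
    ∀ ψ : (α → Bool) → ℂ, ∃ r : ℝ, 0 ≤ r ∧
      (∑ x, ∑ y, starRingEnd ℂ (ψ x) * ρ x y * ψ y) = (r : ℂ)

open Classical in
/-- Separability of an operator on the qubits indexed by `α` with respect to the
bipartition `(A, Aᶜ)`: a finite convex combination of tensor products of density
operators. -/
def SeparableWrt {α : Type*} [Fintype α] [DecidableEq α] (A : Set α)
    (ρ : (α → Bool) → (α → Bool) → ℂ) : Prop :=
  ∃ (k : ℕ) (p : Fin k → ℝ)
    (σ : Fin k → ({a : α // a ∈ A} → Bool) → ({a : α // a ∈ A} → Bool) → ℂ)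
    (τ : Fin k → ({a : α // a ∉ A} → Bool) → ({a : α // a ∉ A} → Bool) → ℂ),
    (∀ i, 0 ≤ p i) ∧ (∑ i, p i = 1) ∧
    (∀ i, IsDensityOp (σ i)) ∧ (∀ i, IsDensityOp (τ i)) ∧
    ∀ x y, ρ x y = ∑ i, (p i : ℂ) *
      (σ i (fun a => x a.1) (fun a => y a.1) * τ i (fun a => x a.1) (fun a => y a.1))


instance {α : Type*} [DecidableEq α] (r : α → α → Prop) [DecidableRel r] :
    DecidableRel (SimpleGraph.fromRel r).Adj := fun a b =>
  inferInstanceAs (Decidable (a ≠ b ∧ (r a b ∨ r b a)))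

/-- The line graph on `{1, …, n}` (as `Fin n`) with edges between consecutive vertices. -/
def lineGraph (n : ℕ) : SimpleGraph (Fin n) :=
  SimpleGraph.fromRel (fun i j => (i : ℕ) + 1 = (j : ℕ))

instance (n : ℕ) : DecidableRel (lineGraph n).Adj := fun a b =>
  inferInstanceAs (Decidable (a ≠ b ∧ ((a : ℕ) + 1 = (b : ℕ) ∨ (b : ℕ) + 1 = (a : ℕ))))

/-- The extension `I_R ⊗ s` of an operator `s` on `n` qubits by the identity on an extra
reference qubit labelled `0`. -/
def liftOp {n : ℕ} (s : QState (Fin n) → QState (Fin n)) (ψ : QState (Fin (n + 1))) :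
    QState (Fin (n + 1)) :=
  fun x => s (fun y => ψ (Fin.cons (x 0) y)) (fun k => x k.succ)

end


/-! In a tree the path `p` is the only path from `R` to `j`, and every walk from `R` to `j`
contains it, hence passes through `v`; so `j ∉ C_R`. As `C_R` is a union of components of `G - v`,
every edge of `G` lies inside `{v} ∪ C_R` or inside `V ∖ C_R`. Once the bit `b` of qubit `v` is
fixed, the amplitude of `|G⟩` therefore factors into a state on `C_R` times a state on the rest,
and tracing out `v` leaves the equal mixture over `b` of these two product states. -/

section GraphSign

variable {V : Type*}

lemma edgeSign_mk (x : V → Bool) (a c : V) :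
    edgeSign x s(a, c) = if x a && x c then -1 else 1 := rfl

lemma edgeSign_mul_self (x : V → Bool) (e : Sym2 V) : edgeSign x e * edgeSign x e = 1 := by
  induction e using Sym2.ind with
  | _ a c => rw [edgeSign_mk]; split_ifs <;> norm_num

lemma conj_edgeSign (x : V → Bool) (e : Sym2 V) : starRingEnd ℂ (edgeSign x e) = edgeSign x e := by
  induction e using Sym2.ind with
  | _ a c => rw [edgeSign_mk]; split_ifs <;> simp

lemma edgeSign_and_mul_edgeSign_and (x m₁ m₂ : V → Bool) {a c : V}
    (h : xor (m₁ a && m₁ c) (m₂ a && m₂ c) = true) :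
    edgeSign (fun w => x w && m₁ w) s(a, c) * edgeSign (fun w => x w && m₂ w) s(a, c) =
      edgeSign x s(a, c) := by
  simp only [edgeSign_mk]
  revert h
  cases x a <;> cases x c <;> cases m₁ a <;> cases m₁ c <;> cases m₂ a <;> cases m₂ c <;>
    norm_num

variable [Fintype V] (G : SimpleGraph V) [DecidableRel G.Adj]

def graphSign (x : V → Bool) : ℂ := ∏ e ∈ G.edgeFinset, edgeSign x e

lemma graphState_eq [DecidableEq V] (x : V → Bool) :
    graphState G x = ((Real.sqrt 2 : ℝ) : ℂ)⁻¹ ^ Fintype.card V * graphSign G x := rfl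

lemma graphSign_mul_self (x : V → Bool) : graphSign G x * graphSign G x = 1 := by
  rw [graphSign, ← Finset.prod_mul_distrib]
  exact Finset.prod_eq_one fun e _ => edgeSign_mul_self x e

lemma conj_graphSign (x : V → Bool) : starRingEnd ℂ (graphSign G x) = graphSign G x := by
  rw [graphSign, map_prod]
  exact Finset.prod_congr rfl fun e _ => conj_edgeSign x e

lemma graphSign_and_mul_graphSign_and (x m₁ m₂ : V → Bool)
    (h : ∀ a c, G.Adj a c → xor (m₁ a && m₁ c) (m₂ a && m₂ c) = true) :
    graphSign G (fun w => x w && m₁ w) * graphSign G (fun w => x w && m₂ w) = graphSign G x := by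
  rw [graphSign, graphSign, graphSign, ← Finset.prod_mul_distrib]
  refine Finset.prod_congr rfl fun e he => ?_
  induction e using Sym2.ind with
  | _ a c => exact edgeSign_and_mul_edgeSign_and x m₁ m₂ (h a c (G.mem_edgeFinset.mp he))

end GraphSign

section Glue

variable {V : Type*} [DecidableEq V]

def glue (v : V) (b : Bool) (x : {u : V // u ≠ v} → Bool) : V → Bool :=
  fun w => if h : w ≠ v then x ⟨w, h⟩ else b

@[simp]
lemma glue_self (v : V) (b : Bool) (x : {u : V // u ≠ v} → Bool) : glue v b x v = b :=
  dif_neg (not_not.mpr rfl)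

@[simp]
lemma glue_of_ne {v w : V} (h : w ≠ v) (b : Bool) (x : {u : V // u ≠ v} → Bool) :
    glue v b x w = x ⟨w, h⟩ :=
  dif_pos h

lemma glue_and_glue (v : V) (b : Bool) (x m : {u : V // u ≠ v} → Bool) :
    (fun w => glue v b x w && glue v true m w) = glue v b (fun t => x t && m t) := by
  funext w
  by_cases h : w = v
  · subst h; simp
  · simp [h]

end Glue

open Classical in
noncomputable def zeroExtend {α : Type*} (P : α → Prop) (xP : {a // P a} → Bool) : α → Bool :=
  fun t => if h : P t then xP ⟨t, h⟩ else false

open Classical in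
lemma zeroExtend_restrict {α : Type*} (P : α → Prop) (x : α → Bool) :
    zeroExtend P (fun a => x a.1) = fun t => x t && decide (P t) := by
  funext t
  by_cases h : P t <;> simp [zeroExtend, h]

section Sides

variable {V : Type*} [DecidableEq V]

open Classical in
noncomputable def sideMask (v : V) (P : {u : V // u ≠ v} → Prop) : V → Bool :=
  glue v true (fun t => decide (P t))

/-- Every edge of `G` lies inside exactly one of `{v} ∪ A` and `{v} ∪ Aᶜ`: edges at `v` because
`v` is the only common vertex, the others because `A` is a union of components of `G - v`. -/
lemma xor_sideMask_of_adj (G : SimpleGraph V) {v : V} {A : Set {u : V // u ≠ v}}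
    (hA : ∀ a c, (inducedSub G (· ≠ v)).Adj a c → (a ∈ A ↔ c ∈ A)) {a c : V} (h : G.Adj a c) :
    xor (sideMask v (· ∈ A) a && sideMask v (· ∈ A) c)
      (sideMask v (· ∉ A) a && sideMask v (· ∉ A) c) = true := by
  by_cases ha : a = v
  · subst ha
    by_cases hc : ⟨c, h.ne'⟩ ∈ A <;> simp [sideMask, h.ne', hc]
  by_cases hc : c = v
  · subst hc
    by_cases ha' : ⟨a, ha⟩ ∈ A <;> simp [sideMask, ha, ha']
  have hac := hA ⟨a, ha⟩ ⟨c, hc⟩ h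
  by_cases ha' : ⟨a, ha⟩ ∈ A <;> simp_all [sideMask]

end Sides

lemma inv_sqrt_two_pow_mul_self (n : ℕ) :
    ((Real.sqrt 2 : ℝ) : ℂ)⁻¹ ^ n * ((Real.sqrt 2 : ℝ) : ℂ)⁻¹ ^ n = (2 : ℂ)⁻¹ ^ n := by
  rw [← mul_pow, ← mul_inv, ← Complex.ofReal_mul, Real.mul_self_sqrt zero_le_two]
  norm_num

lemma conj_inv_sqrt_two_pow (n : ℕ) :
    starRingEnd ℂ (((Real.sqrt 2 : ℝ) : ℂ)⁻¹ ^ n) = ((Real.sqrt 2 : ℝ) : ℂ)⁻¹ ^ n := by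
  rw [map_pow, map_inv₀, Complex.conj_ofReal]

section SideState

variable {V : Type*} [Fintype V] [DecidableEq V]

lemma card_eq_card_add_card_compl_add_one (v : V) (P : {u : V // u ≠ v} → Prop) :
    Nat.card V = Nat.card {a // P a} + Nat.card {a // ¬ P a} + 1 := by
  classical
  rw [← Nat.card_congr (Equiv.optionSubtypeNe v), Finite.card_option,
    ← Nat.card_congr (Equiv.sumCompl P), Nat.card_sum]

variable (G : SimpleGraph V) [DecidableRel G.Adj]

/-- The graph state of `G` induced on `P`, with `Z^b` applied to the neighbours of `v`:
zero-extension switches off every edge not inside `{v} ∪ P`. -/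
noncomputable def sideState (v : V) (P : {u : V // u ≠ v} → Prop) (b : Bool) :
    QState {a // P a} :=
  fun xS => ((Real.sqrt 2 : ℝ) : ℂ)⁻¹ ^ Nat.card {a // P a} *
    graphSign G (glue v b (zeroExtend P xS))

lemma qInner_sideState (v : V) (P : {u : V // u ≠ v} → Prop) [DecidablePred P] (b : Bool) :
    qInner (sideState G v P b) (sideState G v P b) = 1 := by
  have hflat : ∀ xS, starRingEnd ℂ (sideState G v P b xS) * sideState G v P b xS =
      (2 : ℂ)⁻¹ ^ Nat.card {a // P a} := fun xS => by
    rw [sideState, map_mul, conj_inv_sqrt_two_pow, conj_graphSign, mul_mul_mul_comm,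
      inv_sqrt_two_pow_mul_self, graphSign_mul_self, mul_one]
  rw [qInner, Finset.sum_congr rfl fun xS _ => hflat xS, Finset.sum_const, Finset.card_univ,
    Fintype.card_fun, Fintype.card_bool, Nat.card_eq_fintype_card, nsmul_eq_mul, Nat.cast_pow,
    ← mul_pow]
  norm_num

lemma sideState_restrict (v : V) (P : {u : V // u ≠ v} → Prop) (b : Bool)
    (x : {u : V // u ≠ v} → Bool) :
    sideState G v P b (fun a => x a.1) = ((Real.sqrt 2 : ℝ) : ℂ)⁻¹ ^ Nat.card {a // P a} *
      graphSign G (fun w => glue v b x w && sideMask v P w) := by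
  rw [sideState, zeroExtend_restrict, sideMask, glue_and_glue]

lemma graphState_glue_eq_mul_sideState {v : V} {A : Set {u : V // u ≠ v}}
    (hA : ∀ a c, (inducedSub G (· ≠ v)).Adj a c → (a ∈ A ↔ c ∈ A))
    (b : Bool) (x : {u : V // u ≠ v} → Bool) :
    graphState G (glue v b x) = ((Real.sqrt 2 : ℝ) : ℂ)⁻¹ *
      (sideState G v (· ∈ A) b (fun a => x a.1) * sideState G v (· ∉ A) b (fun a => x a.1)) := by
  rw [sideState_restrict, sideState_restrict, graphState_eq, ← Nat.card_eq_fintype_card,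
    ← graphSign_and_mul_graphSign_and G _ _ _ fun a c h => xor_sideMask_of_adj G hA h,
    card_eq_card_add_card_compl_add_one v (· ∈ A)]
  ring

end SideState

section Separability

variable {α : Type*} [Fintype α] [DecidableEq α]

lemma isDensityOp_outer {u : QState α} (hu : qInner u u = 1) : IsDensityOp (outer u u) := by
  refine ⟨fun x y => ?_, ?_, fun ψ => ?_⟩
  · simp only [outer, map_mul, Complex.conj_conj]
    ring
  · simpa only [outer, qInner, mul_comm] using hu
  · refine ⟨Complex.normSq (∑ x, starRingEnd ℂ (ψ x) * u x), Complex.normSq_nonneg _, ?_⟩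
    rw [← Complex.mul_conj, map_sum, Finset.sum_mul_sum]
    refine Finset.sum_congr rfl fun x _ => Finset.sum_congr rfl fun y _ => ?_
    simp only [outer, map_mul, Complex.conj_conj]
    ring

open Classical in
lemma separableWrt_of_eq_sum_outer {ι : Type*} [Fintype ι] (A : Set α)
    (ρ : (α → Bool) → (α → Bool) → ℂ) (p : ι → ℝ) (hp₀ : ∀ i, 0 ≤ p i) (hp₁ : ∑ i, p i = 1)
    (u : ι → QState {a // a ∈ A}) (w : ι → QState {a // a ∉ A})
    (hu : ∀ i, qInner (u i) (u i) = 1) (hw : ∀ i, qInner (w i) (w i) = 1)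
    (hρ : ∀ x y, ρ x y = ∑ i, (p i : ℂ) *
      (outer (u i) (u i) (fun a => x a.1) (fun a => y a.1) *
        outer (w i) (w i) (fun a => x a.1) (fun a => y a.1))) :
    SeparableWrt A ρ := by
  let e := (Fintype.equivFin ι).symm
  refine ⟨Fintype.card ι, p ∘ e, fun k => outer (u (e k)) (u (e k)),
    fun k => outer (w (e k)) (w (e k)), fun k => hp₀ (e k), ?_,
    fun k => isDensityOp_outer (hu (e k)), fun k => isDensityOp_outer (hw (e k)), fun x y => ?_⟩
  · rwa [← e.sum_comp] at hp₁
  · rw [hρ, ← e.sum_comp]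
    rfl

end Separability

lemma ptraceKeep_ne_outer {V : Type*} [Fintype V] [DecidableEq V] (v : V) (ψ φ : QState V)
    (x y : {u : V // u ≠ v} → Bool) :
    ptraceKeep (· ≠ v) (outer ψ φ) x y =
      ∑ b : Bool, ψ (glue v b x) * starRingEnd ℂ (φ (glue v b y)) := by
  have : Unique {w : V // ¬ w ≠ v} :=
    ⟨⟨⟨v, not_not.mpr rfl⟩⟩, fun t => Subtype.ext (not_not.mp t.2)⟩
  refine Finset.sum_equiv (Equiv.funUnique _ Bool) (by simp) fun z _ => ?_
  have hglue : ∀ x' : {u : V // u ≠ v} → Bool,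
      (fun w => if h : w ≠ v then x' ⟨w, h⟩ else z ⟨w, h⟩) = glue v (z default) x' := by
    intro x'
    funext w
    by_cases h : w = v
    · subst h
      simp [Unique.eq_default]
    · simp [h]
  simp only [outer, Equiv.funUnique_apply, hglue]

open Classical in
lemma separableWrt_ptraceKeep_graphState {V : Type*} [Fintype V] [DecidableEq V]
    (G : SimpleGraph V) [DecidableRel G.Adj] {v : V} {A : Set {u : V // u ≠ v}}
    (hA : ∀ a c, (inducedSub G (· ≠ v)).Adj a c → (a ∈ A ↔ c ∈ A)) :
    SeparableWrt A (ptraceKeep (· ≠ v) (outer (graphState G) (graphState G))) := by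
  refine separableWrt_of_eq_sum_outer A _ (fun _ : Bool => 1 / 2) (fun _ => by norm_num)
    (by norm_num) (sideState G v (· ∈ A)) (sideState G v (· ∉ A)) (qInner_sideState G v _)
    (qInner_sideState G v _) fun x y => ?_
  rw [ptraceKeep_ne_outer]
  refine Fintype.sum_congr _ _ fun b => ?_
  have hhalf : ((Real.sqrt 2 : ℝ) : ℂ)⁻¹ * starRingEnd ℂ ((Real.sqrt 2 : ℝ) : ℂ)⁻¹ = 1 / 2 := by
    simpa using inv_sqrt_two_pow_mul_self 1
  rw [graphState_glue_eq_mul_sideState G hA, graphState_glue_eq_mul_sideState G hA]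
  simp only [outer, map_mul]
  push_cast
  rw [← hhalf]
  ring

lemma SimpleGraph.IsTree.mem_support_of_mem_support_isPath {V : Type*} {G : SimpleGraph V}
    (hT : G.IsTree) {a b v : V} {p : G.Walk a b} (hp : p.IsPath) (hv : v ∈ p.support)
    (q : G.Walk a b) : v ∈ q.support := by
  classical
  have hpq : p = q.bypass :=
    congrArg Subtype.val ((hT.isAcyclic.subsingleton_path a b).elim ⟨p, hp⟩ ⟨_, q.bypass_isPath⟩)
  exact q.support_bypass_subset_support (hpq ▸ hv)

lemma not_reachable_inducedSub_ne {V : Type*} {G : SimpleGraph V} {a b v : V} (ha : a ≠ v)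
    (hb : b ≠ v) (h : ∀ q : G.Walk a b, v ∈ q.support) :
    ¬ (inducedSub G (· ≠ v)).Reachable ⟨a, ha⟩ ⟨b, hb⟩ := by
  rintro ⟨q⟩
  have hq := h (q.map ⟨Subtype.val, id⟩)
  rw [SimpleGraph.Walk.support_map] at hq
  obtain ⟨t, -, ht⟩ := List.mem_map.mp hq
  exact t.2 ht

theorem stmt11_general {V : Type*} [Fintype V] [DecidableEq V]
    (G : SimpleGraph V) [DecidableRel G.Adj] (hT : G.IsTree)
    (R j v : V) (hRv : R ≠ v) (hjv : j ≠ v)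
    (p : G.Walk R j) (hp : p.IsPath) (hv : v ∈ p.support) :
    (¬ (inducedSub G (· ≠ v)).Reachable ⟨R, hRv⟩ ⟨j, hjv⟩) ∧
      SeparableWrt
        {t : {u : V // u ≠ v} | (inducedSub G (· ≠ v)).Reachable ⟨R, hRv⟩ t}
        (ptraceKeep (· ≠ v) (outer (graphState G) (graphState G))) :=
  ⟨not_reachable_inducedSub_ne hRv hjv (hT.mem_support_of_mem_support_isPath hp hv),
    separableWrt_ptraceKeep_graphState G fun _ _ hac =>
      ⟨fun h => h.trans hac.reachable, fun h => h.trans hac.symm.reachable⟩⟩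

/-- Let `G` be a tree, `R ≠ j`, and `v ∉ {R, j}` a vertex on the (unique)
path from `R` to `j`.  Then, after deleting `v`, the vertex `j` does not lie in the
connected component `C_R` of `R`, and the reduced state `Tr_v(|G⟩⟨G|)` is separable with
respect to the bipartition `(C_R, V∖({v}∪C_R))`. -/
theorem stmt11 {V : Type*} [Fintype V] [DecidableEq V]
    (G : SimpleGraph V) [DecidableRel G.Adj] (hT : G.IsTree)
    (R j v : V) (hRj : R ≠ j) (hRv : R ≠ v) (hjv : j ≠ v)
    (p : G.Walk R j) (hp : p.IsPath) (hv : v ∈ p.support) :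
    (¬ (inducedSub G (· ≠ v)).Reachable ⟨R, hRv⟩ ⟨j, hjv⟩) ∧
      SeparableWrt
        {t : {u : V // u ≠ v} | (inducedSub G (· ≠ v)).Reachable ⟨R, hRv⟩ t}
        (ptraceKeep (· ≠ v) (outer (graphState G) (graphState G))) :=
  stmt11_general G hT R j v hRv hjv p hp hv
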